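/- Let Γ be a maximal SKHM-consistent set of L_Khm formulas and M^c_Γ its canonical model. Given w ∈ S^c and an action a ∈ Σ_Γ of the form ⟨ψ,⊥,φ'⟩ or ⟨χ^ψ,φ'⟩ such that a is executable at w (w has at least one a-successor): if φ ∈ L(w') for every w' with w →a w', then U(φ' → φ) ∈ Γ. -/

import Mathlib

/-- Formulas of the language L_Khm over a countable set of proposition
letters (represented by `ℕ`): `φ ::= p | ¬φ | (φ∧φ) | Khm(φ,φ,φ)`. -/
inductive Formula : Type
  | atom : ℕ → Formula
  | neg : Formula → Formula
  | and : Formula → Formula → Formula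
  | khm : Formula → Formula → Formula → Formula
deriving DecidableEq

namespace Formula

/-- The falsum `⊥`, as a standard abbreviation. -/
def falsum : Formula := and (atom 0) (neg (atom 0))

/-- The verum `⊤`. -/
def top : Formula := neg falsum

/-- Material implication, as a standard abbreviation. -/
def imp (φ ψ : Formula) : Formula := neg (and φ (neg ψ))

/-- Biimplication. -/
def biimp (φ ψ : Formula) : Formula := and (imp φ ψ) (imp ψ φ)

/-- The universal modality `Uφ := Khm(¬φ, ⊤, ⊥)`. -/
def U (φ : Formula) : Formula := khm (neg φ) top falsum

/-- Uniform substitution of formulas for proposition letters. -/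
def subst (f : ℕ → Formula) : Formula → Formula
  | atom n => f n
  | neg φ => neg (subst f φ)
  | and φ ψ => and (subst f φ) (subst f ψ)
  | khm φ χ ψ => khm (subst f φ) (subst f χ) (subst f ψ)

end Formula

/-- A model (ability map): a labelled transition system over action symbols `Act`,
with a set of states `S`, transitions `R`, and valuation `V`. -/
structure Model (Act : Type) where
  S : Type
  R : Act → S → S → Prop
  V : S → Set ℕ

namespace Model

variable {Act : Type} (M : Model Act)

/-- `M.bigStep σ s t` : `s →σ t`, i.e. `t` is reachable from `s` by executing the
sequence of actions `σ`. -/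
def bigStep : List Act → M.S → M.S → Prop
  | [], s, t => s = t
  | a :: σ, s, t => ∃ u, M.R a s u ∧ bigStep σ u t

/-- `σ = a₁⋯aₙ` is strongly executable at `s` if for each `0 ≤ k < n`,
`s →σ_k t` implies `t` has at least one `a_{k+1}`-successor. -/
def stronglyExec (σ : List Act) (s : M.S) : Prop :=
  ∀ k (h : k < σ.length) (t : M.S),
    M.bigStep (σ.take k) s t → ∃ u, M.R (σ.get ⟨k, h⟩) t u

/-- Satisfaction. `M.sat (Formula.khm ψ χ φ) s` holds iff there is `σ ∈ Act*`
such that for every `s'` with `M, s' ⊨ ψ`: `σ` is strongly `χ`-executable at `s'`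
(strongly executable, and all strictly intermediate states satisfy `χ`) and
`M, t ⊨ φ` for all `t` with `s' →σ t`. -/
def sat : Formula → M.S → Prop
  | .atom n, s => n ∈ M.V s
  | .neg φ, s => ¬ sat φ s
  | .and φ ψ, s => sat φ s ∧ sat ψ s
  | .khm ψ χ φ, s => ∃ σ : List Act, ∀ s', sat ψ s' →
      (M.stronglyExec σ s' ∧
        ∀ k, 0 < k → k < σ.length → ∀ t, M.bigStep (σ.take k) s' t → sat χ t) ∧
      (∀ t, M.bigStep σ s' t → sat φ t)

end Model

/-- A formula is valid (w.r.t. the class of all models over action symbols `Act`)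
if it is satisfied at every state of every model. -/
def Valid (Act : Type) (φ : Formula) : Prop :=
  ∀ M : Model Act, Nonempty M.S → ∀ s : M.S, M.sat φ s

/-- Boolean evaluation treating proposition letters and `Khm`-formulas as atoms. -/
def evalB (v : Formula → Bool) : Formula → Bool
  | .atom n => v (.atom n)
  | .neg φ => ! evalB v φ
  | .and φ ψ => evalB v φ && evalB v ψ
  | .khm ψ χ φ => v (.khm ψ χ φ)

/-- Propositional tautologies. -/
def Tautology (φ : Formula) : Prop := ∀ v, evalB v φ = true

open Formula in
/-- Derivability in the proof system SKHM. -/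
inductive Deriv : Formula → Prop
  | taut {φ} : Tautology φ → Deriv φ
  | distU (p q) : Deriv (((U p).and (U (p.imp q))).imp (U q))
  | tU (p) : Deriv ((U p).imp p)
  | fourKhmU (p o q) : Deriv ((khm p o q).imp (U (khm p o q)))
  | fiveKhmU (p o q) : Deriv ((neg (khm p o q)).imp (U (neg (khm p o q))))
  | empKhm (p q) : Deriv ((U (p.imp q)).imp (khm p falsum q))
  | compKhm (p o r q) :
      Deriv ((((khm p o r).and (khm r o q)).and (U (r.imp o))).imp (khm p o q))
  | oneKhm (p o q) :
      Deriv (((khm p o q).and (neg (khm p falsum q))).imp (khm p falsum o))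
  | uKhm (p' p o o' q q') :
      Deriv (((((U (p'.imp p)).and (U (o.imp o'))).and (U (q.imp q'))).and
        (khm p o q)).imp (khm p' o' q'))
  | mp {φ ψ} : Deriv (φ.imp ψ) → Deriv φ → Deriv ψ
  | necU {φ} : Deriv φ → Deriv (U φ)
  | sub {φ} (f : ℕ → Formula) : Deriv φ → Deriv (φ.subst f)

/-- Conjunction of a finite list of formulas. -/
def conjList : List Formula → Formula
  | [] => Formula.top
  | φ :: L => φ.and (conjList L)

/-- A set of formulas is SKHM-consistent if no finite conjunction of its
members has its negation derivable in SKHM. -/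
def ConsistentSet (Γ : Set Formula) : Prop :=
  ∀ L : List Formula, (∀ φ ∈ L, φ ∈ Γ) → ¬ Deriv (Formula.neg (conjList L))

/-- Maximal SKHM-consistent set. -/
def MCS (Γ : Set Formula) : Prop :=
  ConsistentSet Γ ∧ ∀ Δ, ConsistentSet Δ → Γ ⊆ Δ → Δ = Γ

/-- `Δ|Khm`: the positive `Khm`-formulas of `Δ`. -/
def khmPart (Δ : Set Formula) : Set Formula :=
  {θ ∈ Δ | ∃ ψ χ φ, θ = Formula.khm ψ χ φ}

/-- `Φ_Γ`: the set of all MCSs `Δ` with `Δ|Khm = Γ|Khm`. -/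
def PhiGamma (Γ : Set Formula) : Set (Set Formula) :=
  {Δ | MCS Δ ∧ khmPart Δ = khmPart Γ}

/-- Canonical action symbols: `⟨ψ,⊥,φ⟩` (`one ψ φ`) and `⟨χ^ψ,φ⟩` (`two χ ψ φ`). -/
inductive CanAct : Type
  | one : Formula → Formula → CanAct
  | two : Formula → Formula → Formula → CanAct
deriving DecidableEq

/-- The formula in the last component of a canonical action. -/
def CanAct.post : CanAct → Formula
  | .one _ φ => φ
  | .two _ _ φ => φ

/-- The canonical action set
`Σ_Γ = {⟨ψ,⊥,φ⟩ : Khm(ψ,⊥,φ) ∈ Γ} ∪ {⟨χ^ψ,φ⟩ : Khm(ψ,χ,φ) ∈ Γ, ¬Khm(ψ,⊥,φ) ∈ Γ}`. -/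
def SigmaGamma (Γ : Set Formula) : Set CanAct :=
  {a | (∃ ψ φ, a = CanAct.one ψ φ ∧ Formula.khm ψ Formula.falsum φ ∈ Γ) ∨
       (∃ χ ψ φ, a = CanAct.two χ ψ φ ∧ Formula.khm ψ χ φ ∈ Γ ∧
          Formula.neg (Formula.khm ψ Formula.falsum φ) ∈ Γ)}

/-- Canonical states: pairs `(Δ, χ^ψ)` (the marker `χ^ψ` is the pair `(χ, ψ)`)
with `χ ∈ Δ ∈ Φ_Γ`, and either `⟨χ^ψ,φ⟩ ∈ Σ_Γ` for some `φ`, or `⟨ψ,⊥,χ⟩ ∈ Σ_Γ`. -/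
def CanStates (Γ : Set Formula) : Set (Set Formula × Formula × Formula) :=
  {w | w.1 ∈ PhiGamma Γ ∧ w.2.1 ∈ w.1 ∧
       ((∃ φ, CanAct.two w.2.1 w.2.2 φ ∈ SigmaGamma Γ) ∨
        CanAct.one w.2.2 w.2.1 ∈ SigmaGamma Γ)}

/-- The canonical model `M^c_Γ` over the action set `Σ_Γ`. For a canonical state
`w`, `L(w) = w.1.1` and `R(w) = w.1.2`. -/
def canonicalModel (Γ : Set Formula) : Model {a : CanAct // a ∈ SigmaGamma Γ} where
  S := {w : Set Formula × Formula × Formula // w ∈ CanStates Γ}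
  R a w w' :=
    match a.1 with
    | CanAct.one ψ φ => ψ ∈ w.1.1 ∧ w'.1.2 = (φ, ψ)
    | CanAct.two χ ψ φ => w.1.2 = (χ, ψ) ∧ φ ∈ w'.1.1
  V w := {n | Formula.atom n ∈ w.1.1}

/-! If `U(φ' → φ) ∉ Γ`, then `{θ | Uθ ∈ Γ} ∪ {φ', ¬φ}` is consistent, and a Lindenbaum extension
`Δ` of it lies in `Φ_Γ` because axioms 4KhmU and 5KhmU make every (negated) `Khm`-formula of `Γ`
universal. Since `φ' ∈ Δ`, the state of `M^c_Γ` with first component `Δ` and marker `φ'^ψ`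
(for `a = ⟨ψ,⊥,φ'⟩`) or `φ'^⊥` (for `a = ⟨χ^ψ,φ'⟩`, using `Khm(⊥,⊥,φ')` from EMPKhm) is an
`a`-successor of `w`, so it contains `φ`, contradicting `¬φ ∈ Δ`. -/

open Formula

@[grind =] lemma evalB_neg (v : Formula → Bool) (φ : Formula) : evalB v φ.neg = !evalB v φ := rfl

@[grind =] lemma evalB_and (v : Formula → Bool) (φ ψ : Formula) :
    evalB v (φ.and ψ) = (evalB v φ && evalB v ψ) := rfl

@[grind =] lemma evalB_imp (v : Formula → Bool) (φ ψ : Formula) :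
    evalB v (φ.imp ψ) = (!evalB v φ || evalB v ψ) := by
  simp [Formula.imp, evalB]

@[grind =] lemma evalB_falsum (v : Formula → Bool) : evalB v falsum = false := by
  simp [falsum, evalB]

@[grind =] lemma evalB_top (v : Formula → Bool) : evalB v top = true := by
  simp [top, evalB, evalB_falsum]

@[grind =] lemma evalB_conjList_nil (v : Formula → Bool) : evalB v (conjList []) = true :=
  evalB_top v

@[grind =] lemma evalB_conjList_cons (v : Formula → Bool) (φ : Formula) (L : List Formula) :
    evalB v (conjList (φ :: L)) = (evalB v φ && evalB v (conjList L)) := rfl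

lemma deriv_conjList_append (L₁ L₂ : List Formula) :
    Deriv ((conjList (L₁ ++ L₂)).imp ((conjList L₁).and (conjList L₂))) := by
  induction L₁ with
  | nil => exact Deriv.taut fun v => by grind
  | cons φ L ih => exact Deriv.mp (Deriv.taut fun v => by grind) ih

lemma deriv_khm_falsum_falsum (φ : Formula) : Deriv (khm falsum falsum φ) :=
  Deriv.mp (Deriv.empKhm falsum φ) (Deriv.necU (Deriv.taut fun v => by grind))

lemma exists_deriv_and_conjList_imp_of_forall_mem_insert {S : Set Formula} {ψ : Formula} :
    ∀ {L : List Formula}, (∀ θ ∈ L, θ ∈ insert ψ S) →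
      ∃ L' : List Formula, (∀ θ ∈ L', θ ∈ S) ∧ Deriv ((ψ.and (conjList L')).imp (conjList L))
  | [], _ => ⟨[], by simp, Deriv.taut fun v => by grind⟩
  | θ :: L, hL => by
    obtain ⟨hθ, hL⟩ := List.forall_mem_cons.1 hL
    obtain ⟨L', hL'S, hd⟩ := exists_deriv_and_conjList_imp_of_forall_mem_insert hL
    rcases hθ with rfl | hθ
    · exact ⟨L', hL'S, Deriv.mp (Deriv.taut fun v => by grind) hd⟩
    · exact ⟨θ :: L', List.forall_mem_cons.2 ⟨hθ, hL'S⟩,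
        Deriv.mp (Deriv.taut fun v => by grind) hd⟩

lemma exists_deriv_conjList_imp_neg_of_not_consistentSet_insert {S : Set Formula}
    {ψ : Formula} (h : ¬ ConsistentSet (insert ψ S)) :
    ∃ L : List Formula, (∀ θ ∈ L, θ ∈ S) ∧ Deriv ((conjList L).imp ψ.neg) := by
  simp only [ConsistentSet, not_forall, not_not] at h
  obtain ⟨L, hL, hd⟩ := h
  obtain ⟨L', hL'S, hd'⟩ := exists_deriv_and_conjList_imp_of_forall_mem_insert hL
  exact ⟨L', hL'S, Deriv.mp (Deriv.mp (Deriv.taut fun v => by grind) hd') hd⟩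

lemma ConsistentSet.exists_MCS_superset {T : Set Formula} (hT : ConsistentSet T) :
    ∃ Δ, T ⊆ Δ ∧ MCS Δ := by
  have hchains : ∀ c ⊆ {S | ConsistentSet S}, IsChain (· ⊆ ·) c → c.Nonempty →
      ∃ ub ∈ {S | ConsistentSet S}, ∀ S ∈ c, S ⊆ ub := by
    refine fun c hc hchain hne => ⟨⋃₀ c, fun L hL => ?_, fun _ => Set.subset_sUnion_of_mem⟩
    obtain ⟨S, hS, hLS⟩ := hchain.directedOn.exists_mem_subset_of_finite_of_subset_sUnion hne
      L.finite_toSet hL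
    exact hc hS L hLS
  obtain ⟨Δ, hTΔ, hmax⟩ := zorn_subset_nonempty _ hchains T hT
  exact ⟨Δ, hTΔ, hmax.1, fun Δ' hΔ' hsub => (hmax.2 hΔ' hsub).antisymm hsub⟩

namespace MCS

variable {Γ : Set Formula} (hΓ : MCS Γ)
include hΓ

lemma mem_of_consistentSet_insert {φ : Formula} (h : ConsistentSet (insert φ Γ)) : φ ∈ Γ :=
  hΓ.2 _ h (Set.subset_insert φ Γ) ▸ Set.mem_insert φ Γ

lemma mem_of_deriv_conjList_imp {L₀ : List Formula} (hL₀ : ∀ θ ∈ L₀, θ ∈ Γ) {φ : Formula}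
    (hd : Deriv ((conjList L₀).imp φ)) : φ ∈ Γ := by
  refine hΓ.mem_of_consistentSet_insert fun L hL hdL => ?_
  obtain ⟨L', hL'Γ, hd'⟩ := exists_deriv_and_conjList_imp_of_forall_mem_insert hL
  refine hΓ.1 (L₀ ++ L') (List.forall_mem_append.2 ⟨hL₀, hL'Γ⟩) ?_
  exact Deriv.mp (Deriv.mp (Deriv.mp (Deriv.mp (Deriv.taut fun v => by grind)
    hd) hd') hdL) (deriv_conjList_append L₀ L')

lemma mem_of_deriv {φ : Formula} (hd : Deriv φ) : φ ∈ Γ :=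
  hΓ.mem_of_deriv_conjList_imp (L₀ := []) (by simp) (Deriv.mp (Deriv.taut fun v => by grind) hd)

lemma mem_of_imp_mem {φ ψ : Formula} (hφ : φ ∈ Γ) (himp : φ.imp ψ ∈ Γ) : ψ ∈ Γ :=
  hΓ.mem_of_deriv_conjList_imp (L₀ := [φ, φ.imp ψ]) (by simp [hφ, himp])
    (Deriv.taut fun v => by grind)

lemma mem_of_deriv_imp {φ ψ : Formula} (hd : Deriv (φ.imp ψ)) (hφ : φ ∈ Γ) : ψ ∈ Γ :=
  hΓ.mem_of_imp_mem hφ (hΓ.mem_of_deriv hd)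

lemma and_mem {φ ψ : Formula} (hφ : φ ∈ Γ) (hψ : ψ ∈ Γ) : φ.and ψ ∈ Γ :=
  hΓ.mem_of_deriv_conjList_imp (L₀ := [φ, ψ]) (by simp [hφ, hψ])
    (Deriv.taut fun v => by grind)

lemma neg_notMem {φ : Formula} (hφ : φ ∈ Γ) : φ.neg ∉ Γ := fun hnφ =>
  hΓ.1 [φ, φ.neg] (by simp [hφ, hnφ]) (Deriv.taut fun v => by grind)

lemma mem_or_neg_mem (φ : Formula) : φ ∈ Γ ∨ φ.neg ∈ Γ := by
  refine or_iff_not_imp_left.2 fun hφ => ?_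
  obtain ⟨L, hLΓ, hd⟩ := exists_deriv_conjList_imp_neg_of_not_consistentSet_insert
    (mt hΓ.mem_of_consistentSet_insert hφ)
  exact hΓ.mem_of_deriv_conjList_imp hLΓ hd

lemma U_mem_of_U_imp_mem {φ ψ : Formula} (hφ : U φ ∈ Γ) (himp : U (φ.imp ψ) ∈ Γ) : U ψ ∈ Γ :=
  hΓ.mem_of_deriv_imp (Deriv.distU φ ψ) (hΓ.and_mem hφ himp)

lemma U_mem_of_deriv_imp {φ ψ : Formula} (hd : Deriv (φ.imp ψ)) (hφ : U φ ∈ Γ) : U ψ ∈ Γ :=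
  hΓ.U_mem_of_U_imp_mem hφ (hΓ.mem_of_deriv (Deriv.necU hd))

lemma U_and_mem {φ ψ : Formula} (hφ : U φ ∈ Γ) (hψ : U ψ ∈ Γ) : U (φ.and ψ) ∈ Γ :=
  hΓ.U_mem_of_U_imp_mem hψ
    (hΓ.U_mem_of_deriv_imp (ψ := ψ.imp (φ.and ψ)) (Deriv.taut fun v => by grind) hφ)

lemma U_conjList_mem : ∀ {L : List Formula}, (∀ θ ∈ L, U θ ∈ Γ) → U (conjList L) ∈ Γ
  | [], _ => hΓ.mem_of_deriv (Deriv.necU (Deriv.taut fun v => by grind))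
  | _ :: _, hL => hΓ.U_and_mem (List.forall_mem_cons.1 hL).1
      (U_conjList_mem (List.forall_mem_cons.1 hL).2)

lemma mem_PhiGamma_of_forall_U_mem {Δ : Set Formula} (hΔ : MCS Δ)
    (hU : ∀ θ, U θ ∈ Γ → θ ∈ Δ) : Δ ∈ PhiGamma Γ := by
  refine ⟨hΔ, Set.ext fun θ => ⟨?_, ?_⟩⟩
  · rintro ⟨hθΔ, ψ, χ, ρ, rfl⟩
    refine ⟨(hΓ.mem_or_neg_mem _).resolve_right fun hnθ => ?_, ψ, χ, ρ, rfl⟩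
    exact hΔ.neg_notMem hθΔ (hU _ (hΓ.mem_of_deriv_imp (Deriv.fiveKhmU ψ χ ρ) hnθ))
  · rintro ⟨hθΓ, ψ, χ, ρ, rfl⟩
    exact ⟨hU _ (hΓ.mem_of_deriv_imp (Deriv.fourKhmU ψ χ ρ) hθΓ), ψ, χ, ρ, rfl⟩

lemma exists_mem_PhiGamma_of_U_neg_notMem {ψ : Formula} (h : U ψ.neg ∉ Γ) :
    ∃ Δ ∈ PhiGamma Γ, ψ ∈ Δ := by
  by_cases hcons : ConsistentSet (insert ψ {θ | U θ ∈ Γ})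
  · obtain ⟨Δ, hsub, hΔ⟩ := hcons.exists_MCS_superset
    exact ⟨Δ, hΓ.mem_PhiGamma_of_forall_U_mem hΔ fun θ hθ => hsub (Or.inr hθ),
      hsub (Set.mem_insert ψ _)⟩
  · obtain ⟨L, hL, hd⟩ := exists_deriv_conjList_imp_neg_of_not_consistentSet_insert hcons
    exact (h (hΓ.U_mem_of_deriv_imp hd (hΓ.U_conjList_mem hL))).elim

lemma exists_mem_PhiGamma_of_U_imp_notMem {φ ψ : Formula} (h : U (φ.imp ψ) ∉ Γ) :
    ∃ Δ ∈ PhiGamma Γ, φ ∈ Δ ∧ ψ ∉ Δ := by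
  obtain ⟨Δ, hΔ, hmem⟩ := hΓ.exists_mem_PhiGamma_of_U_neg_notMem (ψ := φ.and ψ.neg) h
  have hΔ' : MCS Δ := hΔ.1
  refine ⟨Δ, hΔ, hΔ'.mem_of_deriv_imp (Deriv.taut fun v => by grind) hmem,
    fun hψ => hΔ'.neg_notMem hψ (hΔ'.mem_of_deriv_imp (Deriv.taut fun v => by grind) hmem)⟩

end MCS

lemma canonicalModel.exists_R_of_post_mem {Γ : Set Formula} (hΓ : MCS Γ)
    {w : (canonicalModel Γ).S} {a : {a : CanAct // a ∈ SigmaGamma Γ}}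
    (hexec : ∃ w', (canonicalModel Γ).R a w w')
    {Δ : Set Formula} (hΔ : Δ ∈ PhiGamma Γ) (hpost : a.1.post ∈ Δ) :
    ∃ w', (canonicalModel Γ).R a w w' ∧ w'.1.1 = Δ := by
  obtain ⟨w₀, hw₀⟩ := hexec
  rcases a with ⟨⟨ψ, φ'⟩ | ⟨χ, ψ, φ'⟩, ha⟩
  · exact ⟨⟨(Δ, φ', ψ), hΔ, hpost, Or.inr ha⟩, ⟨hw₀.1, rfl⟩, rfl⟩
  · have hone : CanAct.one falsum φ' ∈ SigmaGamma Γ :=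
      Or.inl ⟨falsum, φ', rfl, hΓ.mem_of_deriv (deriv_khm_falsum_falsum φ')⟩
    exact ⟨⟨(Δ, φ', falsum), hΔ, hpost, Or.inr hone⟩, ⟨hw₀.1, hpost⟩, rfl⟩

/-- for a canonical state `w` and `a ∈ Σ_Γ` (of the form
`⟨ψ,⊥,φ'⟩` or `⟨χ^ψ,φ'⟩`, with last component `φ' = a.1.post`) executable at
`w`: if `φ ∈ L(w')` for every `w'` with `w →a w'`, then `U(φ' → φ) ∈ Γ`. -/
theorem IMPinTail (Γ : Set Formula) (hΓ : MCS Γ)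
    (w : (canonicalModel Γ).S) (a : {a : CanAct // a ∈ SigmaGamma Γ})
    (hexec : ∃ w', (canonicalModel Γ).R a w w') (φ : Formula)
    (h : ∀ w', (canonicalModel Γ).R a w w' → φ ∈ w'.1.1) :
    Formula.U ((a.1.post).imp φ) ∈ Γ := by
  by_contra hU
  obtain ⟨Δ, hΔ, hpost, hφ⟩ := hΓ.exists_mem_PhiGamma_of_U_imp_notMem hU
  obtain ⟨w', hw', rfl⟩ := canonicalModel.exists_R_of_post_mem hΓ hexec hΔ hpost
  exact hφ (h w' hw')
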